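/- For A(x) = |x|, let C be the Calderón commutator with kernel K(x,y) = (|x|−|y|)/(x−y)². For every c > 0 and the interval Q = (c/2, 3c/2), one has for a.e. x ∈ Q: C_Q 1(x) = p.v.∫_{2Q} (|x|−|y|)/(x−y)² dy + ∫_{R∖2Q} ( (|x|−|y|)/(x−y)² − (|c|−|y|)/(c−y)² ) dy = 2(log x − log c), where 2Q = (0, 2c). -/

import Mathlib

open MeasureTheory Filter Set

noncomputable section

namespace TL1

/-- An interval ("cube") in `ℝ` with center `c` and length `len > 0`. -/
structure ICube where
  c : ℝ
  len : ℝ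
  len_pos : 0 < len

namespace ICube

/-- The open interval `(c - ℓ/2, c + ℓ/2)`. -/
def set (Q : ICube) : Set ℝ := Set.Ioo (Q.c - Q.len / 2) (Q.c + Q.len / 2)

/-- The dilated interval `2Q = (c - ℓ, c + ℓ)`. -/
def double (Q : ICube) : ICube := ⟨Q.c, 2 * Q.len, mul_pos two_pos Q.len_pos⟩

end ICube

/-- The average `f_Q` of `f` over the interval `Q`. -/
def avg (Q : ICube) (f : ℝ → ℝ) : ℝ := (Q.len)⁻¹ * ∫ x in Q.set, f x

/-- The mean oscillation `‖f‖_Q = inf_b ℓ⁻¹ ∫_Q |f-b|`. -/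
def osc (Q : ICube) (f : ℝ → ℝ) : ℝ :=
  ⨅ b : ℝ, (Q.len)⁻¹ * ∫ x in Q.set, |f x - b|

/-- The fixed unit interval `Q₀` centered at the origin. -/
def Q0 : ICube := ⟨0, 1, one_pos⟩

/-- The `BMO` seminorm `sup_Q ‖f‖_Q`. -/
def bmoSeminorm (f : ℝ → ℝ) : ℝ := ⨆ Q : ICube, osc Q f

/-- Membership in `BMO(ℝ)`. -/
def MemBMO (f : ℝ → ℝ) : Prop :=
  LocallyIntegrable f volume ∧ BddAbove (Set.range fun Q : ICube => osc Q f)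

/-- The `BMO` norm `‖f‖*_BMO = ‖f‖_BMO + |f_{Q₀}|`. -/
def bmoNorm (f : ℝ → ℝ) : ℝ := bmoSeminorm f + |avg Q0 f|

/-- The length `ℓ̃` of the smallest interval `Q̃` containing `Q` and `Q₀`. -/
def tildeLen (Q : ICube) : ℝ :=
  max (Q.c + Q.len / 2) (1 / 2) - min (Q.c - Q.len / 2) (-(1 / 2))

/-- The log-distance function `L(Q) = log max(ℓ̃/ℓ, ℓ̃) + 1`. -/
def Lfun (Q : ICube) : ℝ := Real.log (max (tildeLen Q / Q.len) (tildeLen Q)) + 1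

/-- The `LMO` seminorm `sup_Q L(Q)·‖f‖_Q`. -/
def lmoSeminorm (f : ℝ → ℝ) : ℝ := ⨆ Q : ICube, Lfun Q * osc Q f

/-- Membership in `LMO(ℝ)`. -/
def MemLMO (f : ℝ → ℝ) : Prop :=
  LocallyIntegrable f volume ∧ BddAbove (Set.range fun Q : ICube => Lfun Q * osc Q f)

/-- The principal value `p.v.∫_S g(y) dy = lim_{ε→0⁺} ∫_{{y ∈ S : |y-x|>ε}} g(y) dy`,
where the singularity is at `x`. -/
def pv (S : Set ℝ) (x : ℝ) (g : ℝ → ℝ) : ℝ :=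
  limUnder (nhdsWithin (0 : ℝ) (Set.Ioi 0))
    (fun ε => ∫ y in S \ Metric.closedBall x ε, g y)

/-- The Calderón commutator kernel `K_A(x,y) = (A(x)-A(y))/(x-y)²`. -/
def KA (A : ℝ → ℝ) (x y : ℝ) : ℝ := (A x - A y) / (x - y) ^ 2

/-- The localized Calderón commutator
`C_{A,Q} g(x) = p.v.∫_{2Q} K_A(x,y)g(y)dy + ∫_{ℝ∖2Q}(K_A(x,y)-K_A(c,y))g(y)dy`. -/
def CAQ (A : ℝ → ℝ) (Q : ICube) (g : ℝ → ℝ) : ℝ → ℝ := fun x =>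
  pv Q.double.set x (fun y => KA A x y * g y)
    + ∫ y in (Q.double.set)ᶜ, (KA A x y - KA A Q.c y) * g y

/-- `C_{A,Q} 1`. -/
def CAQone (A : ℝ → ℝ) (Q : ICube) : ℝ → ℝ := CAQ A Q (fun _ => 1)

/-- For `f ∈ BMO`, `C_{A,Q} f = f_{2Q}·C_{A,Q}1 + C_{A,Q}(f - f_{2Q})`. -/
def CAQbmo (A : ℝ → ℝ) (Q : ICube) (f : ℝ → ℝ) : ℝ → ℝ := fun x =>
  avg Q.double f * CAQone A Q x + CAQ A Q (fun y => f y - avg Q.double f) x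

/-- The localized Hilbert transform
`H_Q g(x) = p.v.∫_{2Q} g(y)/(x-y) dy + ∫_{ℝ∖2Q}(1/(x-y)-1/(c-y))g(y)dy`. -/
def HQ (Q : ICube) (g : ℝ → ℝ) : ℝ → ℝ := fun x =>
  pv Q.double.set x (fun y => g y / (x - y))
    + ∫ y in (Q.double.set)ᶜ, (1 / (x - y) - 1 / (Q.c - y)) * g y


/-!
For `A = |·|` the kernel is `1/(x-y)` when `x, y ≥ 0` and `2x/(x-y)² - 1/(x-y)` when `x ≥ 0 ≥ y`.
Hence, for `0 < x < 2c`, the principal value over `2Q = (0, 2c)` is `log x - log (2c - x)`.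
Off `2Q`, the terms `2x/(x-y)²` and `2c/(c-y)²` both integrate to `2` over `y ≤ 0` and cancel;
what remains are differences `1/(x-y) - 1/(c-y)`, with antiderivative `log |c-y| - log |x-y|`,
contributing `log x - log c` on `y ≤ 0` and `log (2c - x) - log c` on `y ≥ 2c`.
The sum is `2 (log x - log c)`, at every point of `Q`.
-/

open Real Topology

lemma KA_abs_of_nonneg {x y : ℝ} (hx : 0 ≤ x) (hy : 0 ≤ y) :
    KA (fun t => |t|) x y = (x - y)⁻¹ := by
  rw [KA, abs_of_nonneg hx, abs_of_nonneg hy, sq, div_self_mul_self']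

lemma KA_abs_of_nonpos {x y : ℝ} (hx : 0 ≤ x) (hy : y ≤ 0) :
    KA (fun t => |t|) x y = 2 * x * ((x - y) ^ 2)⁻¹ - (x - y)⁻¹ := by
  rw [KA, abs_of_nonneg hx, abs_of_nonpos hy, show x - -y = 2 * x - (x - y) by ring, sub_div,
    div_eq_mul_inv, sq, div_self_mul_self']

lemma pv_congr {S : Set ℝ} {x : ℝ} {g h : ℝ → ℝ} (hS : MeasurableSet S) (hgh : EqOn g h S) :
    pv S x g = pv S x h := by
  unfold pv
  congr! 2 with ε
  exact setIntegral_congr_fun (hS.diff measurableSet_closedBall) (hgh.mono sdiff_subset)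

lemma integrableOn_inv_sub_Icc {x u v : ℝ} (hx : x ∉ Icc u v) :
    IntegrableOn (fun y => (x - y)⁻¹) (Icc u v) :=
  ((continuousOn_const.sub continuousOn_id).inv₀ fun _ hy =>
    sub_ne_zero.2 (ne_of_mem_of_not_mem hy hx).symm).integrableOn_Icc

lemma integral_Ioo_inv_sub {x u v : ℝ} (huv : u ≤ v) (hx : x ∉ Icc u v) :
    ∫ y in Ioo u v, (x - y)⁻¹ = log (x - u) - log (x - v) := by
  have h0 : (0 : ℝ) ∉ uIcc (x - v) (x - u) := by
    rw [uIcc_of_le (by linarith)]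
    contrapose! hx
    exact ⟨by linarith [hx.2], by linarith [hx.1]⟩
  have hu : x - u ≠ 0 := sub_ne_zero.2 (by rintro rfl; exact hx (left_mem_Icc.2 huv))
  have hv : x - v ≠ 0 := sub_ne_zero.2 (by rintro rfl; exact hx (right_mem_Icc.2 huv))
  rw [← integral_Ioc_eq_integral_Ioo, ← intervalIntegral.integral_of_le huv,
    intervalIntegral.integral_comp_sub_left (fun y => y⁻¹), integral_inv h0, log_div hu hv]

lemma Ioo_diff_closedBall {a b x ε : ℝ} (hε : 0 ≤ ε) (ha : ε < x - a) (hb : ε < b - x) :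
    Ioo a b \ Metric.closedBall x ε = Ioo a (x - ε) ∪ Ioo (x + ε) b := by
  ext y
  simp only [Real.closedBall_eq_Icc, Set.mem_sdiff, mem_Ioo, mem_Icc, mem_union, not_and_or, not_le]
  constructor
  · rintro ⟨⟨hay, hyb⟩, hy | hy⟩
    exacts [Or.inl ⟨hay, hy⟩, Or.inr ⟨hy, hyb⟩]
  · rintro (⟨hay, hy⟩ | ⟨hy, hyb⟩)
    exacts [⟨⟨hay, by linarith⟩, Or.inl hy⟩, ⟨⟨by linarith, hyb⟩, Or.inr hy⟩]

lemma pv_Ioo_inv_sub {a b x : ℝ} (hax : a < x) (hxb : x < b) :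
    pv (Ioo a b) x (fun y => (x - y)⁻¹) = log (x - a) - log (b - x) := by
  refine Tendsto.limUnder_eq (tendsto_const_nhds.congr' ?_)
  filter_upwards [Ioo_mem_nhdsGT (lt_min (sub_pos.2 hax) (sub_pos.2 hxb))] with ε ⟨hε, hεmin⟩
  have ha : ε < x - a := hεmin.trans_le (min_le_left _ _)
  have hb : ε < b - x := hεmin.trans_le (min_le_right _ _)
  have hleft : x ∉ Icc a (x - ε) := fun h => by linarith [h.2]
  have hright : x ∉ Icc (x + ε) b := fun h => by linarith [h.1]
  rw [Ioo_diff_closedBall hε.le ha hb,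
    setIntegral_union (disjoint_left.2 fun y h₁ h₂ => by linarith [h₁.2, h₂.1]) measurableSet_Ioo
      ((integrableOn_inv_sub_Icc hleft).mono_set Ioo_subset_Icc_self)
      ((integrableOn_inv_sub_Icc hright).mono_set Ioo_subset_Icc_self),
    integral_Ioo_inv_sub (by linarith) hleft, integral_Ioo_inv_sub (by linarith) hright,
    sub_sub_cancel, sub_add_cancel_left, log_neg_eq_log, ← neg_sub b x, log_neg_eq_log]
  ring

lemma integrableOn_Iic_deriv_of_nonneg' {g g' : ℝ → ℝ} {a l : ℝ}
    (hderiv : ∀ y ∈ Iic a, HasDerivAt g (g' y) y) (hg' : ∀ y ∈ Iio a, 0 ≤ g' y)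
    (hg : Tendsto g atBot (𝓝 l)) : IntegrableOn g' (Iic a) := by
  have hreflect : IntegrableOn (fun y => g' (-y)) (Ioi (-a)) := by
    refine integrableOn_Ioi_deriv_of_nonneg' (g := fun y => -g (-y)) (l := -l) (fun y hy => ?_)
      (fun y hy => hg' _ (mem_Iio.2 (neg_lt.1 hy))) (hg.comp tendsto_neg_atTop_atBot).neg
    exact (((hderiv (-y) (mem_Iic.2 (neg_le.1 hy))).comp y (hasDerivAt_neg y)).neg).congr_deriv
      (by ring)
  simpa using ((integrableOn_Ici_iff_integrableOn_Ioi).2 hreflect).comp_neg_Iic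

lemma tendsto_inv_const_sub_cobounded (p : ℝ) :
    Tendsto (fun y => (p - y)⁻¹) (Bornology.cobounded ℝ) (𝓝 0) :=
  tendsto_inv₀_cobounded.comp (tendsto_const_sub_cobounded p)

-- `Real.log` is even, so this also holds where `p - y` and `q - y` are negative.
lemma hasDerivAt_log_sub_sub_log_sub {p q y : ℝ} (hp : p ≠ y) (hq : q ≠ y) :
    HasDerivAt (fun y => log (q - y) - log (p - y)) ((p - y)⁻¹ - (q - y)⁻¹) y := by
  have hlog {r : ℝ} (hr : r ≠ y) : HasDerivAt (fun y => log (r - y)) (-1 / (r - y)) y :=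
    ((hasDerivAt_id' y).const_sub r).log (sub_ne_zero.2 hr)
  exact ((hlog hq).sub (hlog hp)).congr_deriv (by ring)

lemma tendsto_log_sub_sub_log_sub (p q : ℝ) :
    Tendsto (fun y => log (q - y) - log (p - y)) (Bornology.cobounded ℝ) (𝓝 0) := by
  have hlog : Tendsto (fun y => log (1 + (q - p) * (p - y)⁻¹)) (Bornology.cobounded ℝ) (𝓝 0) := by
    have h := ((tendsto_inv_const_sub_cobounded p).const_mul (q - p)).const_add 1
    rw [mul_zero, add_zero] at h
    simpa only [Function.comp_def, log_one] using (continuousAt_log one_ne_zero).tendsto.comp h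
  refine hlog.congr' ?_
  filter_upwards [(tendsto_const_sub_cobounded p).eventually_ne_cobounded 0,
    (tendsto_const_sub_cobounded q).eventually_ne_cobounded 0] with y hp hq
  rw [← log_div hq hp]
  congr 1
  field_simp
  ring

lemma hasDerivAt_inv_const_sub {a y : ℝ} (hy : a ≠ y) :
    HasDerivAt (fun y => (a - y)⁻¹) ((a - y) ^ 2)⁻¹ y :=
  (((hasDerivAt_id' y).const_sub a).inv (sub_ne_zero.2 hy)).congr_deriv (by ring)

lemma integrableOn_Iic_inv_sub_sq {a t : ℝ} (ht : t < a) :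
    IntegrableOn (fun y => ((a - y) ^ 2)⁻¹) (Iic t) :=
  integrableOn_Iic_deriv_of_nonneg' (fun y hy => hasDerivAt_inv_const_sub (by grind))
    (fun _ _ => by positivity)
    ((tendsto_inv_const_sub_cobounded a).mono_left IsOrderBornology.atBot_le_cobounded)

lemma integral_Iic_inv_sub_sq {a t : ℝ} (ht : t < a) :
    ∫ y in Iic t, ((a - y) ^ 2)⁻¹ = (a - t)⁻¹ := by
  rw [integral_Iic_of_hasDerivAt_of_tendsto' (fun y hy => hasDerivAt_inv_const_sub (by grind))
    (integrableOn_Iic_inv_sub_sq ht)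
    ((tendsto_inv_const_sub_cobounded a).mono_left IsOrderBornology.atBot_le_cobounded), sub_zero]

lemma integrableOn_Iic_inv_sub_sub_inv_sub {p q t : ℝ} (hp : t < p) (hq : t < q) :
    IntegrableOn (fun y => (p - y)⁻¹ - (q - y)⁻¹) (Iic t) := by
  wlog hpq : p ≤ q generalizing p q
  · simpa only [Pi.neg_def, neg_sub] using (this hq hp (le_of_not_ge hpq)).neg
  refine integrableOn_Iic_deriv_of_nonneg'
    (fun y hy => hasDerivAt_log_sub_sub_log_sub (by grind) (by grind)) (fun y hy => ?_)
    ((tendsto_log_sub_sub_log_sub p q).mono_left IsOrderBornology.atBot_le_cobounded)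
  have hy : y < t := hy
  exact sub_nonneg.2 (inv_anti₀ (by linarith) (by linarith))

lemma integral_Iic_inv_sub_sub_inv_sub {p q t : ℝ} (hp : t < p) (hq : t < q) :
    ∫ y in Iic t, ((p - y)⁻¹ - (q - y)⁻¹) = log (q - t) - log (p - t) := by
  rw [integral_Iic_of_hasDerivAt_of_tendsto'
    (fun y hy => hasDerivAt_log_sub_sub_log_sub (by grind) (by grind))
    (integrableOn_Iic_inv_sub_sub_inv_sub hp hq)
    ((tendsto_log_sub_sub_log_sub p q).mono_left IsOrderBornology.atBot_le_cobounded), sub_zero]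

lemma integrableOn_Ioi_inv_sub_sub_inv_sub {p q t : ℝ} (hp : p < t) (hq : q < t) :
    IntegrableOn (fun y => (p - y)⁻¹ - (q - y)⁻¹) (Ioi t) := by
  wlog hpq : p ≤ q generalizing p q
  · simpa only [Pi.neg_def, neg_sub] using (this hq hp (le_of_not_ge hpq)).neg
  refine integrableOn_Ioi_deriv_of_nonneg'
    (fun y hy => hasDerivAt_log_sub_sub_log_sub (by grind) (by grind)) (fun y hy => ?_)
    ((tendsto_log_sub_sub_log_sub p q).mono_left IsOrderBornology.atTop_le_cobounded)
  have hy : t < y := hy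
  rw [← neg_sub y p, ← neg_sub y q, inv_neg, inv_neg, neg_sub_neg, sub_nonneg]
  exact inv_anti₀ (by linarith) (by linarith)

lemma integral_Ioi_inv_sub_sub_inv_sub {p q t : ℝ} (hp : p < t) (hq : q < t) :
    ∫ y in Ioi t, ((p - y)⁻¹ - (q - y)⁻¹) = log (t - p) - log (t - q) := by
  rw [integral_Ioi_of_hasDerivAt_of_tendsto'
    (fun y hy => hasDerivAt_log_sub_sub_log_sub (by grind) (by grind))
    (integrableOn_Ioi_inv_sub_sub_inv_sub hp hq)
    ((tendsto_log_sub_sub_log_sub p q).mono_left IsOrderBornology.atTop_le_cobounded),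
    ← neg_sub t p, ← neg_sub t q, log_neg_eq_log, log_neg_eq_log]
  ring

lemma eqOn_Iic_KA_abs_sub {x c : ℝ} (hx : 0 ≤ x) (hc : 0 ≤ c) :
    EqOn (fun y => KA (fun t => |t|) x y - KA (fun t => |t|) c y)
      (fun y => 2 * x * ((x - y) ^ 2)⁻¹ - 2 * c * ((c - y) ^ 2)⁻¹ - ((x - y)⁻¹ - (c - y)⁻¹))
      (Iic 0) := fun y hy => by
  simp only [KA_abs_of_nonpos hx hy, KA_abs_of_nonpos hc hy]
  ring

lemma eqOn_Ici_KA_abs_sub {x c b : ℝ} (hx : 0 ≤ x) (hc : 0 ≤ c) (hb : 0 ≤ b) :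
    EqOn (fun y => KA (fun t => |t|) x y - KA (fun t => |t|) c y)
      (fun y => (x - y)⁻¹ - (c - y)⁻¹) (Ici b) := fun y hy => by
  simp only [KA_abs_of_nonneg hx (hb.trans hy), KA_abs_of_nonneg hc (hb.trans hy)]

lemma integrableOn_Iic_two_mul_inv_sub_sq {a : ℝ} (ha : 0 < a) :
    IntegrableOn (fun y => 2 * a * ((a - y) ^ 2)⁻¹) (Iic 0) :=
  (integrableOn_Iic_inv_sub_sq ha).const_mul _

lemma integrableOn_Iic_KA_abs_sub {x c : ℝ} (hx : 0 < x) (hc : 0 < c) :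
    IntegrableOn (fun y => KA (fun t => |t|) x y - KA (fun t => |t|) c y) (Iic 0) :=
  (((integrableOn_Iic_two_mul_inv_sub_sq hx).sub (integrableOn_Iic_two_mul_inv_sub_sq hc)).sub
    (integrableOn_Iic_inv_sub_sub_inv_sub hx hc)).congr_fun
      (eqOn_Iic_KA_abs_sub hx.le hc.le).symm measurableSet_Iic

lemma integral_Iic_KA_abs_sub {x c : ℝ} (hx : 0 < x) (hc : 0 < c) :
    ∫ y in Iic 0, (KA (fun t => |t|) x y - KA (fun t => |t|) c y) = log x - log c := by
  have hsq : IntegrableOn (fun y => 2 * x * ((x - y) ^ 2)⁻¹ - 2 * c * ((c - y) ^ 2)⁻¹) (Iic 0) :=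
    (integrableOn_Iic_two_mul_inv_sub_sq hx).sub (integrableOn_Iic_two_mul_inv_sub_sq hc)
  rw [setIntegral_congr_fun measurableSet_Iic (eqOn_Iic_KA_abs_sub hx.le hc.le),
    integral_sub hsq (integrableOn_Iic_inv_sub_sub_inv_sub hx hc),
    integral_sub (integrableOn_Iic_two_mul_inv_sub_sq hx) (integrableOn_Iic_two_mul_inv_sub_sq hc),
    integral_const_mul, integral_const_mul, integral_Iic_inv_sub_sq hx,
    integral_Iic_inv_sub_sq hc, integral_Iic_inv_sub_sub_inv_sub hx hc]
  simp only [sub_zero]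
  field_simp
  ring

lemma integrableOn_Ici_KA_abs_sub {b x c : ℝ} (hx : x ∈ Ico 0 b) (hc : c ∈ Ico 0 b) :
    IntegrableOn (fun y => KA (fun t => |t|) x y - KA (fun t => |t|) c y) (Ici b) :=
  ((integrableOn_Ici_iff_integrableOn_Ioi).2
    (integrableOn_Ioi_inv_sub_sub_inv_sub hx.2 hc.2)).congr_fun
    (eqOn_Ici_KA_abs_sub hx.1 hc.1 (hx.1.trans hx.2.le)).symm measurableSet_Ici

lemma integral_Ici_KA_abs_sub {b x c : ℝ} (hx : x ∈ Ico 0 b) (hc : c ∈ Ico 0 b) :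
    ∫ y in Ici b, (KA (fun t => |t|) x y - KA (fun t => |t|) c y)
      = log (b - x) - log (b - c) := by
  rw [setIntegral_congr_fun measurableSet_Ici (eqOn_Ici_KA_abs_sub hx.1 hc.1 (hx.1.trans hx.2.le)),
    integral_Ici_eq_integral_Ioi, integral_Ioi_inv_sub_sub_inv_sub hx.2 hc.2]

lemma integral_compl_Ioo_KA_abs_sub {b x c : ℝ} (hx : x ∈ Ioo 0 b) (hc : c ∈ Ioo 0 b) :
    ∫ y in (Ioo 0 b)ᶜ, (KA (fun t => |t|) x y - KA (fun t => |t|) c y)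
      = log x - log c + (log (b - x) - log (b - c)) := by
  have hcompl : (Ioo 0 b)ᶜ = Iic 0 ∪ Ici b := by
    ext y
    simp [or_iff_not_imp_left]
  rw [hcompl, setIntegral_union (Iic_disjoint_Ici.2 (not_le.2 (hx.1.trans hx.2)))
      measurableSet_Ici (integrableOn_Iic_KA_abs_sub hx.1 hc.1)
      (integrableOn_Ici_KA_abs_sub (Ioo_subset_Ico_self hx) (Ioo_subset_Ico_self hc)),
    integral_Iic_KA_abs_sub hx.1 hc.1,
    integral_Ici_KA_abs_sub (Ioo_subset_Ico_self hx) (Ioo_subset_Ico_self hc)]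

lemma pv_Ioo_zero_KA_abs {b x : ℝ} (hx : x ∈ Ioo 0 b) :
    pv (Ioo 0 b) x (fun y => KA (fun t => |t|) x y) = log x - log (b - x) := by
  rw [pv_congr measurableSet_Ioo (fun y hy => KA_abs_of_nonneg hx.1.le hy.1.le),
    pv_Ioo_inv_sub hx.1 hx.2, sub_zero]

/-- For the Calderón commutator associated to `A(x) = |x|`, for every `c > 0` and the
interval `Q = (c/2, 3c/2)`, one has `C_Q 1(x) = 2(log x - log c)` for a.e. `x ∈ Q`. -/
theorem statement_18 (c : ℝ) (hc : 0 < c) :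
    ∀ᵐ x ∂(volume : Measure ℝ), x ∈ (ICube.mk c c hc).set →
      CAQone (fun t => |t|) (ICube.mk c c hc) x = 2 * (Real.log x - Real.log c) := by
  refine .of_forall fun x hx => ?_
  have hdouble : (ICube.mk c c hc).double.set = Ioo 0 (2 * c) := by
    simp only [ICube.double, ICube.set]
    ring_nf
  have hx' : x ∈ Ioo 0 (2 * c) := by
    simp only [ICube.set, mem_Ioo] at hx
    constructor <;> linarith
  have hc' : c ∈ Ioo 0 (2 * c) := ⟨hc, by linarith⟩
  simp only [CAQone, CAQ, mul_one, hdouble]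
  rw [pv_Ioo_zero_KA_abs hx', integral_compl_Ioo_KA_abs_sub hx' hc', two_mul, add_sub_cancel_right]
  ring

end TL1
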